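/- arXiv:1212.0048 — 3 statements merged into one kernel-verified Lean document; each statement's English description precedes it below -/
import Mathlib

section
/- Assume p = 2. Then for every integer U ≥ 1: if U is even, W(qU+1) = W(U) + W(qU/2 − 1), and if U is odd, W(qU+1) = W(U) + W((qU+1)/2). -/
/-- A strictly chained `(p,q)`-ary partition of `U`: a finite strictly decreasing
list of positive integers of the form `p^a * q^b`, each part divisible by the next,
summing to `U`. -/
def IsSCPartition (p q U : ℕ) (l : List ℕ) : Prop :=
  (∀ x ∈ l, ∃ a b : ℕ, x = p ^ a * q ^ b) ∧
  List.Chain' (fun x y => y ∣ x ∧ y < x) l ∧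
  l.sum = U

/-- The set of strictly chained `(p,q)`-ary partitions of `U`. -/
def Omega (p q U : ℕ) : Set (List ℕ) := {l | IsSCPartition p q U l}

/-- The subset of `Omega p q U` of partitions with no part equal to `1`. -/
def OmegaStar (p q U : ℕ) : Set (List ℕ) := {l | IsSCPartition p q U l ∧ 1 ∉ l}

/-- `W p q U` is the number of strictly chained `(p,q)`-ary partitions of `U`. -/
noncomputable def W (p q U : ℕ) : ℕ := (Omega p q U).ncard

/-- `Wstar p q U` is the number of strictly chained `(p,q)`-ary partitions of `U`
with no part equal to `1`. -/
noncomputable def Wstar (p q U : ℕ) : ℕ := (OmegaStar p q U).ncard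

/-!
Write `W*` for the count of partitions without part `1`. Removing a final part `1` gives
`W(N+1) = W*(N) + W*(N+1)`. A partition without part `1` either has only even parts, and halving
them counts these by `W(N/2)`, or it has an odd part `q^b` with `b ≥ 1`; then the chain condition
makes every part a multiple of `q`, and dividing by `q` matches these with the partitions of
`N/q` that have an odd part. From these identities `W(qV) = W(qV-1) + W(V)` follows by strong
induction on `V`, halving `V` when it is even, and both cases of the theorem are a short
computation with the same identities.
-/

section Partitions

variable {p q : ℕ}

theorem Set.ncard_sep_add_ncard_sep_not {α : Type*} {s : Set α} (hs : s.Finite)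
    (P : α → Prop) :
    {x ∈ s | P x}.ncard + {x ∈ s | ¬ P x}.ncard = s.ncard :=
  Set.ncard_inter_add_ncard_sdiff_eq_ncard s {x | P x} hs

theorem mem_Omega_iff {N : ℕ} {l : List ℕ} :
    l ∈ Omega p q N ↔ (∀ x ∈ l, ∃ a b : ℕ, x = p ^ a * q ^ b) ∧
      l.Pairwise (fun x y => y ∣ x ∧ y < x) ∧ l.sum = N := by
  have : Trans (fun x y : ℕ => y ∣ x ∧ y < x) (fun x y => y ∣ x ∧ y < x)
      (fun x y => y ∣ x ∧ y < x) :=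
    ⟨fun h₁ h₂ => ⟨h₂.1.trans h₁.1, h₂.2.trans h₁.2⟩⟩
  exact and_congr_right' (and_congr_left' List.isChain_iff_pairwise)

theorem Omega_comm (N : ℕ) : Omega p q N = Omega q p N := by
  ext l
  simp only [mem_Omega_iff]
  refine and_congr (forall₂_congr fun x _ => ⟨?_, ?_⟩) Iff.rfl <;>
    rintro ⟨a, b, rfl⟩ <;> exact ⟨b, a, mul_comm _ _⟩

theorem finite_Omega (p q N : ℕ) : (Omega p q N).Finite := by
  have hinj : Set.InjOn List.toFinset (Omega p q N) := by
    intro l₁ h₁ l₂ h₂ h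
    have s₁ := (mem_Omega_iff.1 h₁).2.1.imp And.right
    have s₂ := (mem_Omega_iff.1 h₂).2.1.imp And.right
    exact (List.perm_of_nodup_nodup_toFinset_eq s₁.nodup s₂.nodup h).eq_of_pairwise
      (fun a _ _ _ hab hba => absurd (hba.trans hab) (lt_irrefl a)) s₁ s₂
  refine Set.Finite.of_finite_image ((Finset.range (N + 1)).powerset.finite_toSet.subset ?_) hinj
  rintro _ ⟨l, hl, rfl⟩
  simp only [Finset.coe_powerset, Finset.coe_range, Set.mem_preimage, Set.mem_powerset_iff]
  intro x hx
  simp only [List.coe_toFinset, Set.mem_ofPred_eq] at hx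
  simpa [Nat.lt_succ_iff, ← (mem_Omega_iff.1 hl).2.2] using List.le_sum_of_mem hx

theorem pos_of_mem_Omega (hp : 0 < p) (hq : 0 < q) {N : ℕ} {l : List ℕ}
    (hl : l ∈ Omega p q N) {x : ℕ} (hx : x ∈ l) : 0 < x := by
  obtain ⟨a, b, rfl⟩ := (mem_Omega_iff.1 hl).1 x hx
  positivity

theorem dvd_or_dvd_of_mem_Omega {N : ℕ} {l : List ℕ} (hl : l ∈ Omega p q N)
    {x y : ℕ} (hx : x ∈ l) (hy : y ∈ l) : x ∣ y ∨ y ∣ x := by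
  have : Std.Symm (fun x y : ℕ => x ∣ y ∨ y ∣ x) := ⟨fun _ _ => Or.symm⟩
  rcases eq_or_ne x y with rfl | hxy
  · exact Or.inl dvd_rfl
  · exact ((mem_Omega_iff.1 hl).2.1.imp (S := fun a b : ℕ => a ∣ b ∨ b ∣ a)
      fun h => Or.inr h.1).forall hx hy hxy

theorem image_append_one_OmegaStar (hp : 0 < p) (hq : 0 < q) (N : ℕ) :
    (· ++ [1]) '' OmegaStar p q N = {l ∈ Omega p q (N + 1) | 1 ∈ l} := by
  ext l
  constructor
  · rintro ⟨m, ⟨hm, h1⟩, rfl⟩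
    obtain ⟨hform, hchain, hsum⟩ := mem_Omega_iff.1 hm
    refine ⟨mem_Omega_iff.2 ⟨?_, ?_, by simp [hsum]⟩, by simp⟩
    · simpa [or_imp, forall_and] using ⟨hform, 0, 0, by simp⟩
    · refine List.pairwise_append.2 ⟨hchain, List.pairwise_singleton _ _, fun x hx y hy => ?_⟩
      obtain rfl := List.mem_singleton.1 hy
      have := pos_of_mem_Omega hp hq hm hx
      have : x ≠ 1 := by rintro rfl; exact h1 hx
      exact ⟨one_dvd x, by omega⟩
  · rintro ⟨hl, h1⟩
    obtain ⟨s, t, rfl⟩ := List.mem_iff_append.1 h1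
    -- every part after `1` would be a positive integer below `1`
    obtain rfl : t = [] := List.eq_nil_iff_forall_not_mem.2 fun y hy => by
      have := pos_of_mem_Omega hp hq hl (List.mem_append_right s (List.mem_cons_of_mem 1 hy))
      have := (List.pairwise_cons.1 (List.pairwise_append.1 (mem_Omega_iff.1 hl).2.1).2.1).1 y hy
      omega
    obtain ⟨hform, hchain, hsum⟩ := mem_Omega_iff.1 hl
    obtain ⟨hchain, -, hlt⟩ := List.pairwise_append.1 hchain
    refine ⟨s, ⟨mem_Omega_iff.2 ⟨fun x hx => hform x (by simp [hx]), hchain,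
      by simpa using hsum⟩, fun h => ?_⟩, rfl⟩
    exact lt_irrefl 1 (hlt 1 h 1 (by simp)).2

theorem W_add_one (hp : 0 < p) (hq : 0 < q) (N : ℕ) :
    W p q (N + 1) = Wstar p q N + Wstar p q (N + 1) := by
  rw [W, Wstar, Wstar, ← Set.ncard_sep_add_ncard_sep_not (finite_Omega p q (N + 1)) (1 ∈ ·),
    ← image_append_one_OmegaStar hp hq,
    Set.ncard_image_of_injective _ (List.append_left_injective [1])]
  rfl

def OmegaDvd (p q c N : ℕ) : Set (List ℕ) := {l ∈ Omega p q N | ∀ x ∈ l, c ∣ x}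

theorem W_eq_ncard_OmegaDvd_add (c N : ℕ) :
    W p q N = (OmegaDvd p q c N).ncard + {l ∈ Omega p q N | ∃ x ∈ l, ¬ c ∣ x}.ncard := by
  rw [W, ← Set.ncard_sep_add_ncard_sep_not (finite_Omega p q N) (fun l => ∀ x ∈ l, c ∣ x)]
  simp only [not_forall, exists_prop]
  rfl

theorem OmegaDvd_eq_empty {c N : ℕ} (h : ¬ c ∣ N) : OmegaDvd p q c N = ∅ :=
  Set.eq_empty_of_forall_notMem fun _ ⟨hl, hdvd⟩ =>
    h ((mem_Omega_iff.1 hl).2.2 ▸ List.dvd_sum hdvd)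

theorem ncard_OmegaDvd_of_not_dvd {c N : ℕ} (h : ¬ c ∣ N) : (OmegaDvd p q c N).ncard = 0 := by
  rw [OmegaDvd_eq_empty h, Set.ncard_empty]

theorem exists_pow_mul_pow_of_mul_left (hpq : p.Coprime q) (hp : 1 < p) {x a b : ℕ}
    (h : p * x = p ^ a * q ^ b) : ∃ a b : ℕ, x = p ^ a * q ^ b := by
  cases a with
  | zero =>
    have := (hpq.pow_right b).eq_one_of_dvd ⟨x, by simpa using h.symm⟩
    omega
  | succ a =>
    exact ⟨a, b, Nat.eq_of_mul_eq_mul_left (n := p) (by omega) (by rw [h]; ring)⟩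

theorem image_map_mul_Omega (hpq : p.Coprime q) (hp : 1 < p) (M : ℕ) :
    List.map (p * ·) '' Omega p q M = OmegaDvd p q p (p * M) := by
  have hp0 : 0 < p := by omega
  ext l
  constructor
  · rintro ⟨m, hm, rfl⟩
    obtain ⟨hform, hchain, hsum⟩ := mem_Omega_iff.1 hm
    refine ⟨mem_Omega_iff.2 ⟨?_, ?_, ?_⟩, by simp⟩
    · simp only [List.mem_map, forall_exists_index, and_imp, forall_apply_eq_imp_iff₂]
      rintro x hx
      obtain ⟨a, b, rfl⟩ := hform x hx
      exact ⟨a + 1, b, by ring⟩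
    · exact List.pairwise_map.2 <| hchain.imp fun h =>
        ⟨Nat.mul_dvd_mul_left p h.1, Nat.mul_lt_mul_of_pos_left h.2 hp0⟩
    · rw [List.sum_map_mul_left, List.map_id', hsum]
  · rintro ⟨hl, hdvd⟩
    obtain ⟨hform, hchain, hsum⟩ := mem_Omega_iff.1 hl
    have hdiv : (l.map (· / p)).map (p * ·) = l := by
      rw [List.map_map]
      exact (List.map_congr_left fun x hx => Nat.mul_div_cancel' (hdvd x hx)).trans l.map_id
    refine ⟨l.map (· / p), mem_Omega_iff.2 ⟨?_, ?_, ?_⟩, hdiv⟩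
    · simp only [List.mem_map, forall_exists_index, and_imp, forall_apply_eq_imp_iff₂]
      intro x hx
      obtain ⟨a, b, hab⟩ := hform x hx
      exact exists_pow_mul_pow_of_mul_left hpq hp ((Nat.mul_div_cancel' (hdvd x hx)).trans hab)
    · rw [← hdiv] at hchain
      exact (List.pairwise_map.1 hchain).imp fun h =>
        ⟨(Nat.mul_dvd_mul_iff_left hp0).1 h.1, (Nat.mul_lt_mul_left hp0).1 h.2⟩
    · rw [← hdiv, List.sum_map_mul_left, List.map_id'] at hsum
      exact Nat.eq_of_mul_eq_mul_left hp0 hsum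

theorem ncard_OmegaDvd_mul_self (hpq : p.Coprime q) (hp : 1 < p) (M : ℕ) :
    (OmegaDvd p q p (p * M)).ncard = W p q M := by
  rw [← image_map_mul_Omega hpq hp,
    Set.ncard_image_of_injective _ (List.map_injective_iff.2 (mul_right_injective₀ (by omega)))]
  rfl

theorem image_map_mul_Omega_right (hpq : p.Coprime q) (hq : 1 < q) (M : ℕ) :
    List.map (q * ·) '' Omega p q M = OmegaDvd p q q (q * M) := by
  simpa only [OmegaDvd, ← Omega_comm] using image_map_mul_Omega hpq.symm hq M

theorem dvd_of_not_dvd_of_ne_one {x a b : ℕ} (h : x = p ^ a * q ^ b) (hpx : ¬ p ∣ x)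
    (hx : x ≠ 1) : q ∣ x := by
  subst h
  cases a with
  | zero => cases b with
    | zero => simp at hx
    | succ b => simp [pow_succ]
  | succ a => exact absurd (dvd_mul_of_dvd_left (dvd_pow_self p a.succ_ne_zero) _) hpx

theorem OmegaStar_eq_union (hp : 1 < p) (hq : 1 < q) (N : ℕ) :
    OmegaStar p q N = OmegaDvd p q p N ∪ {l ∈ OmegaDvd p q q N | ∃ x ∈ l, ¬ p ∣ x} := by
  ext l
  constructor
  · rintro ⟨hl, h1⟩
    by_cases h : ∀ x ∈ l, p ∣ x
    · exact Or.inl ⟨hl, h⟩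
    push Not at h
    obtain ⟨x, hx, hpx⟩ := h
    have hq_dvd : ∀ z ∈ l, ¬ p ∣ z → q ∣ z := fun z hz hpz => by
      obtain ⟨a, b, hab⟩ := hl.1 z hz
      exact dvd_of_not_dvd_of_ne_one hab hpz (ne_of_mem_of_not_mem hz h1)
    refine Or.inr ⟨⟨hl, fun y hy => ?_⟩, x, hx, hpx⟩
    -- a divisor of `x` is again not divisible by `p`
    rcases dvd_or_dvd_of_mem_Omega hl hx hy with hxy | hyx
    · exact (hq_dvd x hx hpx).trans hxy
    · exact hq_dvd y hy fun h => hpx (h.trans hyx)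
  · rintro (⟨hl, hdvd⟩ | ⟨⟨hl, hdvd⟩, -⟩) <;> refine ⟨hl, fun h1 => ?_⟩
    · exact hp.ne' (Nat.dvd_one.1 (hdvd 1 h1))
    · exact hq.ne' (Nat.dvd_one.1 (hdvd 1 h1))

theorem Wstar_eq_ncard_add (hp : 1 < p) (hq : 1 < q) (N : ℕ) :
    Wstar p q N = (OmegaDvd p q p N).ncard
      + {l ∈ OmegaDvd p q q N | ∃ x ∈ l, ¬ p ∣ x}.ncard := by
  refine (congrArg Set.ncard (OmegaStar_eq_union hp hq N)).trans (Set.ncard_union_eq ?_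
    ((finite_Omega p q N).subset fun _ h => h.1) ((finite_Omega p q N).subset fun _ h => h.1.1))
  exact Set.disjoint_left.2 fun l ⟨_, hdvd⟩ ⟨_, x, hx, hpx⟩ => hpx (hdvd x hx)

theorem Wstar_eq_of_not_dvd (hp : 1 < p) (hq : 1 < q) {N : ℕ} (hN : ¬ q ∣ N) :
    Wstar p q N = (OmegaDvd p q p N).ncard := by
  simp [Wstar_eq_ncard_add hp hq, OmegaDvd_eq_empty hN]

theorem Wstar_mul_add (hpq : p.Coprime q) (hp : 1 < p) (hq : 1 < q) (M : ℕ) :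
    Wstar p q (q * M) + (OmegaDvd p q p M).ncard = (OmegaDvd p q p (q * M)).ncard + W p q M := by
  have himage : List.map (q * ·) '' {m ∈ Omega p q M | ∃ y ∈ m, ¬ p ∣ y}
      = {l ∈ OmegaDvd p q q (q * M) | ∃ x ∈ l, ¬ p ∣ x} := by
    rw [← image_map_mul_Omega_right hpq hq]
    ext l
    simp only [Set.mem_sep_iff, Set.mem_image]
    constructor
    · rintro ⟨m, ⟨hm, y, hy, hpy⟩, rfl⟩
      exact ⟨⟨m, hm, rfl⟩, q * y, List.mem_map_of_mem hy,
        fun h => hpy (hpq.dvd_of_dvd_mul_left h)⟩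
    · rintro ⟨⟨m, hm, rfl⟩, x, hx, hpx⟩
      obtain ⟨y, hy, rfl⟩ := List.mem_map.1 hx
      exact ⟨m, ⟨hm, y, hy, fun h => hpx (h.mul_left q)⟩, rfl⟩
  rw [Wstar_eq_ncard_add hp hq, ← himage, W_eq_ncard_OmegaDvd_add p,
    Set.ncard_image_of_injective _ (List.map_injective_iff.2 (mul_right_injective₀ (by omega)))]
  ring

end Partitions

theorem W_mul_eq_W_sub_one_add_W {q : ℕ} (hq : 1 < q) (hq2 : Nat.Coprime 2 q) {V : ℕ}
    (hV : 0 < V) :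
    W 2 q (q * V) = W 2 q (q * V - 1) + W 2 q V := by
  induction V using Nat.strong_induction_on with
  | _ V ih =>
  have hqodd := Nat.coprime_two_left.1 hq2
  obtain ⟨n, hn⟩ : ∃ n, q * V = n + 2 :=
    ⟨q * V - 2, by have := Nat.le_mul_of_pos_right q hV; omega⟩
  have hn_ndvd : ¬ q ∣ n := fun h =>
    hq.ne' (hq2.symm.eq_one_of_dvd ((Nat.dvd_add_right h).1 (hn ▸ dvd_mul_right q V)))
  have hE : (OmegaDvd 2 q 2 (q * V)).ncard
      = (OmegaDvd 2 q 2 n).ncard + (OmegaDvd 2 q 2 V).ncard := by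
    obtain ⟨V', rfl | rfl⟩ := Nat.even_or_odd' V
    · obtain ⟨m, hm⟩ : ∃ m, q * V' = m + 1 :=
        ⟨q * V' - 1, by have := Nat.mul_pos hqodd.pos (by omega : 0 < V'); omega⟩
      have hqV : q * (2 * V') = 2 * (m + 1) := by rw [← hm]; ring
      obtain rfl : n = 2 * m := by omega
      have ih' := ih V' (by omega) (by omega)
      rw [hm, Nat.add_sub_cancel] at ih'
      rw [hqV, ncard_OmegaDvd_mul_self hq2 one_lt_two, ncard_OmegaDvd_mul_self hq2 one_lt_two,
        ncard_OmegaDvd_mul_self hq2 one_lt_two, ih']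
    · have hodd : ¬ 2 ∣ q * (2 * V' + 1) :=
        (hqodd.mul (odd_two_mul_add_one V')).not_two_dvd_nat
      rw [ncard_OmegaDvd_of_not_dvd hodd, ncard_OmegaDvd_of_not_dvd (by omega),
        ncard_OmegaDvd_of_not_dvd (by omega)]
  have hsucc₁ := W_add_one two_pos hqodd.pos n
  have hsucc₂ : W 2 q (n + 2) = Wstar 2 q (n + 1) + Wstar 2 q (n + 2) :=
    W_add_one two_pos hqodd.pos (n + 1)
  have hstar := Wstar_mul_add hq2 one_lt_two hq V
  have hstar' := Wstar_eq_of_not_dvd one_lt_two hq hn_ndvd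
  rw [hn, show n + 2 - 1 = n + 1 by omega] at *
  omega

theorem W_qU_add_one_p_eq_two (q : ℕ) (hq : 1 < q) (hq2 : Nat.Coprime 2 q)
    (U : ℕ) (hU : 1 ≤ U) :
    (Even U → W 2 q (q * U + 1) = W 2 q U + W 2 q (q * U / 2 - 1)) ∧
    (Odd U → W 2 q (q * U + 1) = W 2 q U + W 2 q ((q * U + 1) / 2)) := by
  have hqodd := Nat.coprime_two_left.1 hq2
  have hsucc := W_add_one two_pos hqodd.pos (q * U)
  have hstar := Wstar_mul_add hq2 one_lt_two hq U
  have hstar_succ : Wstar 2 q (q * U + 1) = (OmegaDvd 2 q 2 (q * U + 1)).ncard :=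
    Wstar_eq_of_not_dvd one_lt_two hq fun h =>
      hq.ne' (Nat.dvd_one.1 ((Nat.dvd_add_right (dvd_mul_right q U)).1 h))
  constructor
  · intro hU_even
    obtain ⟨V, rfl⟩ := hU_even.two_dvd
    have hqU : q * (2 * V) = 2 * (q * V) := by ring
    rw [hqU] at hsucc hstar hstar_succ ⊢
    rw [ncard_OmegaDvd_of_not_dvd (by omega)] at hstar_succ
    rw [ncard_OmegaDvd_mul_self hq2 one_lt_two, ncard_OmegaDvd_mul_self hq2 one_lt_two] at hstar
    rw [Nat.mul_div_cancel_left _ two_pos]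
    have := W_mul_eq_W_sub_one_add_W hq hq2 (by omega : 0 < V)
    omega
  · intro hU_odd
    have hqU_odd : ¬ 2 ∣ q * U := (hqodd.mul hU_odd).not_two_dvd_nat
    rw [ncard_OmegaDvd_of_not_dvd hqU_odd, ncard_OmegaDvd_of_not_dvd hU_odd.not_two_dvd_nat]
      at hstar
    obtain ⟨k, hk⟩ : 2 ∣ q * U + 1 := by omega
    rw [hk] at hsucc hstar_succ ⊢
    rw [ncard_OmegaDvd_mul_self hq2 one_lt_two] at hstar_succ
    rw [Nat.mul_div_cancel_left _ two_pos]
    omega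
end

section
/- For every integer U ≥ 1, W(U) = W_p(U) + [q ∣ U]·W(U/q) + Σ_{c=0}^{⌊log_p(U/(q+1))⌋} δ_{p,q}(c,U)·W(⌊U/(p^c q)⌋), where [q ∣ U]·W(U/q) means W(U/q) if q divides U and 0 otherwise, and the sum is empty when U < q+1. -/
/-- `Wp p n` is the number of partitions of `n` into distinct powers of `p`;
equivalently, it is `1` if every digit of `n` in base `p` is `0` or `1`, and `0`
otherwise (with `Wp p 0 = 1`). -/
def Wp (p n : ℕ) : ℕ := if ∀ d ∈ Nat.digits p n, d ≤ 1 then 1 else 0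

/-- `delta p q c U` equals `1` if `⌊U/p^c⌋ ≡ 1 (mod q)` and `Wp p (U mod p^c) = 1`,
and `0` otherwise. -/
def delta (p q c U : ℕ) : ℕ :=
  if (U / p ^ c) % q = 1 ∧ Wp p (U % p ^ c) = 1 then 1 else 0

/-!
In a chained partition the parts divisible by `q` form an initial segment, since every part
divides the ones before it; the remaining parts are coprime to `q`, hence distinct powers of `p`.
This splits `Ω(U)` into three kinds of partitions.

* No part is divisible by `q`: the partition is a base-`p` expansion of `U` with digits `0, 1`,
  which exists (and is then unique) exactly when `Wp p U = 1`.
* Every part is divisible by `q`: dividing by `q` is a bijection onto `Ω(U / q)`.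
* Otherwise let `p ^ c` be the largest part not divisible by `q`. Every larger part is divisible
  by `p ^ c * q`, and the smaller parts are distinct powers of `p` with sum `r < p ^ c`, so
  `U = k * p ^ c * q + p ^ c + r` with `k ≥ 1`. Hence `⌊U / p ^ c⌋ = q k + 1` and
  `r = U mod p ^ c`, and the partition is a scaled copy of a partition of
  `k = ⌊U / (p ^ c q)⌋` followed by the base-`p` expansion of `r`.
-/

theorem List.takeWhile_dropWhile_append {α : Type*} {P : α → Bool} {a b : List α}
    (ha : ∀ x ∈ a, P x) (hb : ∀ y ∈ b.head?, ¬ P y) :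
    (a ++ b).takeWhile P = a ∧ (a ++ b).dropWhile P = b := by
  rw [List.takeWhile_append_of_pos ha, List.dropWhile_append_of_pos ha]
  cases b with
  | nil => simp
  | cons y t => simp [List.takeWhile_cons_of_neg, List.dropWhile_cons_of_neg, hb y rfl]

theorem div_mod_eq_of_eq_mul_add {b q k s U : ℕ} (hq : 1 < q) (hs : s < b)
    (hU : U = k * (b * q) + (b + s)) : U / b % q = 1 ∧ U / (b * q) = k ∧ U % b = s := by
  obtain ⟨hdiv, hmod⟩ := (Nat.div_mod_unique (a := U) (d := q * k + 1) (c := s) (by omega)).2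
    ⟨by rw [hU]; ring, hs⟩
  refine ⟨?_, ?_, hmod⟩
  · rw [hdiv, Nat.mul_add_mod, Nat.mod_eq_of_lt hq]
  · rw [← Nat.div_div_eq_div_mul, hdiv, Nat.mul_add_div (by omega), Nat.div_eq_of_lt hq,
      add_zero]

theorem eq_mul_add_of_div_mod_eq_one {b q U : ℕ} (h : U / b % q = 1) :
    U = U / (b * q) * (b * q) + (b + U % b) := by
  have h2 := Nat.div_add_mod (U / b) q
  rw [h, Nat.div_div_eq_div_mul] at h2
  calc U = b * (U / b) + U % b := (Nat.div_add_mod U b).symm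
    _ = b * (q * (U / (b * q)) + 1) + U % b := by rw [h2]
    _ = _ := by ring

section

variable {p q : ℕ}

def IsDescPowList (p : ℕ) (l : List ℕ) : Prop :=
  l.Pairwise (· > ·) ∧ ∀ x ∈ l, ∃ a, x = p ^ a

def powPartitions (p n : ℕ) : Set (List ℕ) := {l | IsDescPowList p l ∧ l.sum = n}

namespace IsDescPowList

theorem tail {x : ℕ} {t : List ℕ} (h : IsDescPowList p (x :: t)) : IsDescPowList p t :=
  ⟨(List.pairwise_cons.1 h.1).2, fun y hy => h.2 y (List.mem_cons_of_mem x hy)⟩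

theorem sum_tail_lt (hp : 1 < p) {x : ℕ} {t : List ℕ} (h : IsDescPowList p (x :: t)) :
    t.sum < x := by
  induction t generalizing x with
  | nil =>
    obtain ⟨a, rfl⟩ := h.2 x List.mem_cons_self
    simp only [List.sum_nil]
    positivity
  | cons y t ih =>
    have hty : t.sum < y := ih h.tail
    obtain ⟨a, rfl⟩ := h.2 x List.mem_cons_self
    obtain ⟨b, rfl⟩ := h.2 y (by simp)
    have hba : b < a :=
      (Nat.pow_lt_pow_iff_right hp).1 ((List.pairwise_cons.1 h.1).1 _ List.mem_cons_self)
    have : p ^ b * p ≤ p ^ a := pow_succ p b ▸ Nat.pow_le_pow_right (by omega) hba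
    have : p ^ b * 2 ≤ p ^ b * p := Nat.mul_le_mul_left _ hp
    simp only [List.sum_cons]
    omega

theorem pairwise_dvd (hp : 1 < p) {l : List ℕ} (h : IsDescPowList p l) :
    l.Pairwise (fun x y => y ∣ x ∧ y < x) := by
  refine h.1.imp_of_mem fun hx hy hxy => ⟨?_, hxy⟩
  obtain ⟨a, rfl⟩ := h.2 _ hx
  obtain ⟨b, rfl⟩ := h.2 _ hy
  exact Nat.pow_dvd_pow p ((Nat.pow_lt_pow_iff_right hp).1 hxy).le

theorem exists_eq_map_mul_append (hp : 1 < p) {l : List ℕ} (h : IsDescPowList p l) :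
    ∃ l' e, IsDescPowList p l' ∧ e ≤ 1 ∧ l = l'.map (· * p) ++ List.replicate e 1 := by
  induction l with
  | nil => exact ⟨[], 0, ⟨List.Pairwise.nil, by simp⟩, Nat.zero_le 1, rfl⟩
  | cons x r ih =>
    obtain ⟨r', e, hr', he, rfl⟩ := ih h.tail
    obtain ⟨_ | a, rfl⟩ := h.2 x List.mem_cons_self
    · have hnil : r'.map (· * p) ++ List.replicate e 1 = [] := by
        refine List.eq_nil_iff_forall_not_mem.2 fun y hy => ?_
        obtain ⟨b, rfl⟩ := h.2 y (List.mem_cons_of_mem _ hy)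
        have := (List.pairwise_cons.1 h.1).1 _ hy
        simp only [pow_zero, gt_iff_lt, Nat.lt_one_iff] at this
        exact pow_ne_zero b (by omega) this
      exact ⟨[], 1, ⟨List.Pairwise.nil, by simp⟩, le_rfl, by simp [hnil]⟩
    · refine ⟨p ^ a :: r', e, ⟨List.pairwise_cons.2 ⟨fun z hz => ?_, hr'.1⟩, ?_⟩, he, ?_⟩
      · have := (List.pairwise_cons.1 h.1).1 (z * p)
          (List.mem_append_left _ (List.mem_map_of_mem hz))
        rw [pow_succ] at this
        exact Nat.lt_of_mul_lt_mul_right this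
      · rintro y (_ | ⟨_, hy⟩)
        exacts [⟨a, rfl⟩, hr'.2 y hy]
      · simp [pow_succ]

theorem map_mul_append (hp : 1 < p) {l : List ℕ} {e : ℕ} (h : IsDescPowList p l) (he : e ≤ 1) :
    IsDescPowList p (l.map (· * p) ++ List.replicate e 1) := by
  refine ⟨List.pairwise_append.2 ⟨?_, ?_, ?_⟩, ?_⟩
  · exact List.pairwise_map.2 (h.1.imp fun hxy => Nat.mul_lt_mul_of_pos_right hxy (by omega))
  · interval_cases e <;> simp
  · simp only [List.mem_map, List.mem_replicate]
    rintro _ ⟨x, hx, rfl⟩ _ ⟨-, rfl⟩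
    obtain ⟨a, rfl⟩ := h.2 x hx
    exact Nat.one_lt_mul_iff.2 ⟨pow_pos (by omega) a, by omega, by omega⟩
  · simp only [List.mem_append, List.mem_map, List.mem_replicate]
    rintro _ (⟨x, hx, rfl⟩ | ⟨-, rfl⟩)
    · obtain ⟨a, rfl⟩ := h.2 x hx
      exact ⟨a + 1, (pow_succ p a).symm⟩
    · exact ⟨0, rfl⟩

theorem pow_cons {c : ℕ} {t : List ℕ} (ht : IsDescPowList p t)
    (hlt : t.sum < p ^ c) : IsDescPowList p (p ^ c :: t) := by
  refine ⟨List.pairwise_cons.2 ⟨fun y hy => (List.le_sum_of_mem hy).trans_lt hlt, ht.1⟩, ?_⟩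
  rintro y (_ | ⟨_, hy⟩)
  exacts [⟨c, rfl⟩, ht.2 y hy]

end IsDescPowList

theorem mem_powPartitions_iff (hp : 1 < p) {n : ℕ} {l : List ℕ} :
    l ∈ powPartitions p n ↔
      n % p ≤ 1 ∧
        ∃ l' ∈ powPartitions p (n / p), l'.map (· * p) ++ List.replicate (n % p) 1 = l := by
  constructor
  · rintro ⟨hl, hn⟩
    obtain ⟨l', e, hl', he, rfl⟩ := hl.exists_eq_map_mul_append hp
    have hsum : e + p * l'.sum = n := by
      simp only [← hn, List.sum_append, List.sum_map_mul_right, List.map_id', List.sum_replicate,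
        smul_eq_mul, mul_one]
      ring
    obtain ⟨hdiv, hmod⟩ := (Nat.div_mod_unique (by omega)).2 ⟨hsum, by omega⟩
    exact ⟨hmod ▸ he, l', ⟨hl', hdiv.symm⟩, by rw [hmod]⟩
  · rintro ⟨hr, l', ⟨hl', hsum⟩, rfl⟩
    refine ⟨hl'.map_mul_append hp hr, ?_⟩
    simp [List.sum_map_mul_right, hsum, Nat.div_add_mod']

theorem Wp_eq_ite (hp : 1 < p) {n : ℕ} (hn : 0 < n) :
    Wp p n = if n % p ≤ 1 then Wp p (n / p) else 0 := by
  unfold Wp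
  rw [Nat.digits_def' hp hn]
  by_cases h : n % p ≤ 1 <;> simp [h]

theorem Wp_le_one (p n : ℕ) : Wp p n ≤ 1 := by
  unfold Wp
  split_ifs <;> omega

theorem ncard_powPartitions (hp : 1 < p) (n : ℕ) : (powPartitions p n).ncard = Wp p n := by
  induction n using Nat.strong_induction_on with
  | _ n ih =>
  rcases n.eq_zero_or_pos with rfl | hn
  · have : powPartitions p 0 = {[]} := by
      ext l
      refine ⟨fun ⟨hl, hsum⟩ => List.eq_nil_iff_forall_not_mem.2 fun x hx => ?_, ?_⟩
      · obtain ⟨a, rfl⟩ := hl.2 x hx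
        exact pow_ne_zero a (by omega) (List.sum_eq_zero_iff.1 hsum _ hx)
      · rintro rfl
        exact ⟨⟨List.Pairwise.nil, by simp⟩, rfl⟩
    simp [this, Wp]
  rw [Wp_eq_ite hp hn]
  split_ifs with hr
  · have : powPartitions p n =
        (fun l => l.map (· * p) ++ List.replicate (n % p) 1) '' powPartitions p (n / p) := by
      ext l
      simp [mem_powPartitions_iff hp (n := n), hr]
    rw [this, Set.ncard_image_of_injective _ fun l₁ l₂ h =>
      (List.map_injective_iff.2 (mul_left_injective₀ (by omega))) (List.append_cancel_right h)]
    exact ih _ (Nat.div_lt_self hn hp)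
  · have : powPartitions p n = ∅ := by
      ext l
      simp [mem_powPartitions_iff hp (n := n), hr]
    simp [this]

theorem isSCPartition_iff {U : ℕ} {l : List ℕ} :
    IsSCPartition p q U l ↔ (∀ x ∈ l, ∃ a b, x = p ^ a * q ^ b) ∧
      l.Pairwise (fun x y => y ∣ x ∧ y < x) ∧ l.sum = U := by
  have : Trans (fun x y : ℕ => y ∣ x ∧ y < x) (fun x y : ℕ => y ∣ x ∧ y < x)
      (fun x y : ℕ => y ∣ x ∧ y < x) :=
    ⟨fun hxy hyz => ⟨hyz.1.trans hxy.1, hyz.2.trans hxy.2⟩⟩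
  rw [IsSCPartition, List.Chain', List.isChain_iff_pairwise]

theorem IsSCPartition.pos_of_mem (hp : 0 < p) (hq : 0 < q) {U : ℕ} {l : List ℕ}
    (hl : IsSCPartition p q U l) {x : ℕ} (hx : x ∈ l) : 0 < x := by
  obtain ⟨a, b, rfl⟩ := hl.1 x hx
  positivity

theorem Omega_finite (p q U : ℕ) : (Omega p q U).Finite := by
  classical
  refine ((Finset.range (U + 1)).powerset.finite_toSet.image (fun s => s.sort (· ≥ ·))).subset ?_
  intro l hl
  have hdesc : l.Pairwise (· > ·) := (isSCPartition_iff.1 hl).2.1.imp And.right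
  refine ⟨l.toFinset, ?_, (List.toFinset_sort _ hdesc.nodup).2 (hdesc.imp le_of_lt)⟩
  rw [Finset.mem_coe, Finset.mem_powerset]
  intro x hx
  have := (isSCPartition_iff.1 hl).2.2 ▸ List.le_sum_of_mem (List.mem_toFinset.1 hx)
  simpa [Nat.lt_succ_iff] using this

theorem exists_pow_mul_pow_of_mul_eq (hp : 1 < p) (hq : 1 < q) (hpq : p.Coprime q)
    {x i j a b : ℕ} (h : x * (p ^ i * q ^ j) = p ^ a * q ^ b) : ∃ a' b', x = p ^ a' * q ^ b' := by
  have hia : i ≤ a := by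
    have : p ^ i ∣ p ^ a * q ^ b := by rw [← h]; exact ⟨x * q ^ j, by ring⟩
    exact (Nat.pow_dvd_pow_iff_le_right hp).1 ((Nat.Coprime.pow i b hpq).dvd_of_dvd_mul_right this)
  have hjb : j ≤ b := by
    have : q ^ j ∣ p ^ a * q ^ b := by rw [← h]; exact ⟨x * p ^ i, by ring⟩
    exact (Nat.pow_dvd_pow_iff_le_right hq).1
      ((Nat.Coprime.pow j a hpq.symm).dvd_of_dvd_mul_left this)
  refine ⟨a - i, b - j, Nat.eq_of_mul_eq_mul_right (by positivity : 0 < p ^ i * q ^ j) ?_⟩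
  rw [h, ← Nat.sub_add_cancel hia, ← Nat.sub_add_cancel hjb]
  simp only [Nat.add_sub_cancel]
  ring

theorem isSCPartition_map_mul_iff (hp : 1 < p) (hq : 1 < q) (hpq : p.Coprime q)
    {V d : ℕ} (hd : ∃ i j, d = p ^ i * q ^ j) {m : List ℕ} :
    IsSCPartition p q (V * d) (m.map (· * d)) ↔ IsSCPartition p q V m := by
  obtain ⟨i, j, rfl⟩ := hd
  have hd0 : 0 < p ^ i * q ^ j := by positivity
  simp only [isSCPartition_iff, List.forall_mem_map, List.pairwise_map, List.sum_map_mul_right,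
    List.map_id', Nat.mul_dvd_mul_iff_right hd0, Nat.mul_lt_mul_right hd0,
    Nat.mul_left_inj hd0.ne']
  refine and_congr_left' (forall₂_congr fun x _ => ⟨fun ⟨a, b, h⟩ => ?_, fun ⟨a, b, h⟩ => ?_⟩)
  · exact exists_pow_mul_pow_of_mul_eq hp hq hpq h
  · exact ⟨a + i, b + j, by rw [h]; ring⟩

theorem IsSCPartition.exists_eq_map_mul (hp : 1 < p) (hq : 1 < q) (hpq : p.Coprime q)
    {U d : ℕ} (hd : ∃ i j, d = p ^ i * q ^ j) {l : List ℕ} (hl : IsSCPartition p q U l)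
    (hdvd : ∀ x ∈ l, d ∣ x) : ∃ m, IsSCPartition p q (U / d) m ∧ m.map (· * d) = l := by
  have hmap : (l.map (· / d)).map (· * d) = l := by
    rw [List.map_map]
    exact (List.map_congr_left fun x hx => Nat.div_mul_cancel (hdvd x hx)).trans (List.map_id l)
  have hU : U / d * d = U := Nat.div_mul_cancel ((isSCPartition_iff.1 hl).2.2 ▸ List.dvd_sum hdvd)
  refine ⟨_, (isSCPartition_map_mul_iff hp hq hpq hd).1 ?_, hmap⟩
  rwa [hmap, hU]

theorem ncard_setOf_forall_dvd (hp : 1 < p) (hq : 1 < q) (hpq : p.Coprime q)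
    {U d : ℕ} (hd : ∃ i j, d = p ^ i * q ^ j) :
    {l | l ∈ Omega p q U ∧ ∀ x ∈ l, d ∣ x}.ncard = if d ∣ U then W p q (U / d) else 0 := by
  have hd0 : 0 < d := by obtain ⟨i, j, rfl⟩ := hd; positivity
  split_ifs with hdU
  · have : {l | l ∈ Omega p q U ∧ ∀ x ∈ l, d ∣ x} = List.map (· * d) '' Omega p q (U / d) := by
      ext l
      refine ⟨fun ⟨hl, hdvd⟩ => hl.exists_eq_map_mul hp hq hpq hd hdvd, ?_⟩
      rintro ⟨m, hm, rfl⟩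
      refine ⟨?_, by simp⟩
      rw [Omega, Set.mem_ofPred_eq, ← Nat.div_mul_cancel hdU]
      exact (isSCPartition_map_mul_iff hp hq hpq hd).2 hm
    rw [this, W, Set.ncard_image_of_injective _ (List.map_injective_iff.2
      (mul_left_injective₀ hd0.ne'))]
  · have : {l | l ∈ Omega p q U ∧ ∀ x ∈ l, d ∣ x} = ∅ :=
      Set.eq_empty_of_forall_notMem fun l ⟨hl, hdvd⟩ => hdU (hl.2.2 ▸ List.dvd_sum hdvd)
    rw [this, Set.ncard_empty]

theorem not_dvd_pow (hq : 1 < q) (hpq : p.Coprime q) (a : ℕ) : ¬ q ∣ p ^ a := fun h =>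
  hq.ne' ((hpq.pow_left a).symm.eq_one_of_dvd h)

theorem not_dvd_of_mem_dropWhile {l : List ℕ} (hl : l.Pairwise (fun x y => y ∣ x ∧ y < x))
    {x : ℕ} (hx : x ∈ l.dropWhile (q ∣ ·)) : ¬ q ∣ x := by
  obtain ⟨y, t, hyt⟩ := List.exists_cons_of_ne_nil (List.ne_nil_of_mem hx)
  have hy : ¬ q ∣ y := by
    simpa [hyt] using List.head_dropWhile_not (q ∣ ·) (List.ne_nil_of_mem hx)
  have hpw : (y :: t).Pairwise (fun x y => y ∣ x ∧ y < x) :=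
    hyt ▸ hl.sublist (List.dropWhile_suffix _).sublist
  rw [hyt] at hx
  rcases List.mem_cons.1 hx with rfl | hxt
  · exact hy
  · exact fun hqx => hy (hqx.trans ((List.pairwise_cons.1 hpw).1 x hxt).1)

theorem IsSCPartition.isDescPowList_dropWhile {U : ℕ} {l : List ℕ} (hl : IsSCPartition p q U l) :
    IsDescPowList p (l.dropWhile (q ∣ ·)) := by
  obtain ⟨hform, hpw, -⟩ := isSCPartition_iff.1 hl
  refine ⟨(hpw.sublist (List.dropWhile_suffix _).sublist).imp And.right, fun x hx => ?_⟩
  obtain ⟨a, b, rfl⟩ := hform x ((List.dropWhile_suffix _).subset hx)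
  obtain rfl : b = 0 := by
    by_contra hb
    exact not_dvd_of_mem_dropWhile hpw hx (Dvd.dvd.mul_left (dvd_pow_self q hb) _)
  exact ⟨a, mul_one _⟩

theorem setOf_takeWhile_eq_nil (hp : 1 < p) (hq : 1 < q) (hpq : p.Coprime q) (U : ℕ) :
    {l | l ∈ Omega p q U ∧ l.takeWhile (q ∣ ·) = []} = powPartitions p U := by
  ext l
  constructor
  · rintro ⟨hl, hnil⟩
    have : l.dropWhile (q ∣ ·) = l := by
      simpa [hnil] using List.takeWhile_append_dropWhile (p := (q ∣ ·)) (l := l)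
    exact ⟨this ▸ hl.isDescPowList_dropWhile, hl.2.2⟩
  · rintro ⟨hl, hsum⟩
    refine ⟨isSCPartition_iff.2 ⟨fun x hx => ?_, hl.pairwise_dvd hp, hsum⟩, ?_⟩
    · obtain ⟨a, rfl⟩ := hl.2 x hx
      exact ⟨a, 0, (mul_one _).symm⟩
    · refine (List.takeWhile_dropWhile_append (a := []) (by simp) fun y hy => ?_).1
      obtain ⟨a, rfl⟩ := hl.2 y (List.mem_of_mem_head? hy)
      simpa using not_dvd_pow hq hpq a

theorem setOf_dropWhile_eq_nil {U : ℕ} (hU : U ≠ 0) :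
    {l | l ∈ Omega p q U ∧ l.takeWhile (q ∣ ·) ≠ [] ∧ (l.dropWhile (q ∣ ·)).head? = none} =
      {l | l ∈ Omega p q U ∧ ∀ x ∈ l, q ∣ x} := by
  ext l
  simp only [Set.mem_ofPred_eq, List.head?_eq_none_iff, List.dropWhile_eq_nil_iff,
    decide_eq_true_eq]
  refine and_congr_right fun hl => ⟨And.right, fun h => ⟨?_, h⟩⟩
  rw [List.takeWhile_eq_self_iff.2 (by simpa using h)]
  rintro rfl
  exact hU hl.2.2.symm

theorem isSCPartition_map_mul_append (hp : 1 < p) (hq : 1 < q) {k c : ℕ} {m t : List ℕ}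
    (hm : IsSCPartition p q k m) (ht : IsDescPowList p (p ^ c :: t)) :
    IsSCPartition p q (k * (p ^ c * q) + (p ^ c + t.sum))
      (m.map (· * (p ^ c * q)) ++ p ^ c :: t) := by
  obtain ⟨hform, hpw, hsum⟩ := isSCPartition_iff.1 hm
  refine isSCPartition_iff.2 ⟨?_, List.pairwise_append.2 ⟨?_, ht.pairwise_dvd hp, ?_⟩, ?_⟩
  · simp only [List.mem_append, List.mem_map]
    rintro _ (⟨z, hz, rfl⟩ | hy)
    · obtain ⟨a, b, rfl⟩ := hform z hz
      exact ⟨a + c, b + 1, by ring⟩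
    · obtain ⟨a, rfl⟩ := ht.2 _ hy
      exact ⟨a, 0, (mul_one _).symm⟩
  · exact List.pairwise_map.2 (hpw.imp fun h =>
      ⟨mul_dvd_mul_right h.1 _, Nat.mul_lt_mul_of_pos_right h.2 (by positivity)⟩)
  · simp only [List.mem_map]
    rintro _ ⟨z, hz, rfl⟩ y hy
    have hz : 0 < z := hm.pos_of_mem (by omega) (by omega) hz
    have hy : y ∣ p ^ c ∧ y ≤ p ^ c := by
      rcases List.mem_cons.1 hy with rfl | hy
      · exact ⟨dvd_rfl, le_rfl⟩
      · exact ((List.pairwise_cons.1 (ht.pairwise_dvd hp)).1 y hy).imp_right le_of_lt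
    refine ⟨hy.1.trans ⟨z * q, by ring⟩, hy.2.trans_lt ?_⟩
    have : p ^ c * 1 < p ^ c * q := Nat.mul_lt_mul_of_pos_left hq (by positivity)
    nlinarith
  · rw [List.sum_append, List.sum_cons, List.sum_map_mul_right, List.map_id', hsum]

theorem takeWhile_dropWhile_map_mul_append (hq : 1 < q) (hpq : p.Coprime q) (c : ℕ)
    (m t : List ℕ) :
    (m.map (· * (p ^ c * q)) ++ p ^ c :: t).takeWhile (q ∣ ·) = m.map (· * (p ^ c * q)) ∧
      (m.map (· * (p ^ c * q)) ++ p ^ c :: t).dropWhile (q ∣ ·) = p ^ c :: t :=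
  List.takeWhile_dropWhile_append
    (by simpa using fun x _ => (dvd_mul_left q (p ^ c)).mul_left x)
    (by simpa using not_dvd_pow hq hpq c)

theorem map_mul_append_pow_injective (hq : 1 < q) (hpq : p.Coprime q) (c : ℕ) :
    Function.Injective fun x : List ℕ × List ℕ => x.1.map (· * (p ^ c * q)) ++ p ^ c :: x.2 := by
  rintro ⟨m, t⟩ ⟨m', t'⟩ h
  obtain ⟨hm, ht⟩ := takeWhile_dropWhile_map_mul_append hq hpq c m t
  obtain ⟨hm', ht'⟩ := takeWhile_dropWhile_map_mul_append hq hpq c m' t'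
  dsimp only at h
  rw [h] at hm ht
  have hp : p ≠ 0 := by
    rintro rfl
    exact hq.ne' (Nat.coprime_zero_left _ |>.1 hpq)
  have hpos : p ^ c * q ≠ 0 := by positivity
  exact Prod.ext (List.map_injective_iff.2 (mul_left_injective₀ hpos) (hm.symm.trans hm'))
    (List.cons_injective (ht.symm.trans ht'))

def mixedClass (p q U c : ℕ) : Set (List ℕ) :=
  {l | l ∈ Omega p q U ∧ l.takeWhile (q ∣ ·) ≠ [] ∧ (l.dropWhile (q ∣ ·)).head? = some (p ^ c)}

theorem exists_of_mem_mixedClass (hp : 1 < p) (hq : 1 < q) (hpq : p.Coprime q) {U c : ℕ}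
    {l : List ℕ} (hl : l ∈ mixedClass p q U c) :
    ∃ m t, m ∈ Omega p q m.sum ∧ m ≠ [] ∧ IsDescPowList p (p ^ c :: t) ∧
      l = m.map (· * (p ^ c * q)) ++ p ^ c :: t ∧ U = m.sum * (p ^ c * q) + (p ^ c + t.sum) := by
  obtain ⟨hl, hne, hhead⟩ := hl
  obtain ⟨t, ht⟩ : ∃ t, l.dropWhile (q ∣ ·) = p ^ c :: t := by
    rcases h : l.dropWhile (q ∣ ·) with _ | ⟨y, t⟩
    · simp [h] at hhead
    · simp only [h, List.head?_cons, Option.some.injEq] at hhead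
      exact ⟨t, hhead ▸ rfl⟩
  set a := l.takeWhile (q ∣ ·)
  have hsplit : l = a ++ p ^ c :: t := ht ▸ List.takeWhile_append_dropWhile.symm
  obtain ⟨hform, hpw, hsum⟩ := isSCPartition_iff.1 hl
  rw [hsplit, List.pairwise_append] at hpw
  have hdvd : ∀ x ∈ a, p ^ c * q ∣ x := fun x hx =>
    (hpq.pow_left c).mul_dvd_of_dvd_of_dvd (hpw.2.2 x hx _ List.mem_cons_self).1
      (by simpa using List.mem_takeWhile_imp hx)
  have ha : IsSCPartition p q a.sum a :=
    isSCPartition_iff.2 ⟨fun x hx => hform x (hsplit ▸ List.mem_append_left _ hx), hpw.1, rfl⟩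
  obtain ⟨m, hm, hma⟩ := ha.exists_eq_map_mul hp hq hpq ⟨c, 1, by rw [pow_one]⟩ hdvd
  refine ⟨m, t, hm.2.2 ▸ hm, ?_, ht ▸ hl.isDescPowList_dropWhile, hma ▸ hsplit, ?_⟩
  · rintro rfl
    exact hne hma.symm
  · rw [← hsum, hsplit, ← hma, List.sum_append, List.sum_cons, List.sum_map_mul_right,
      List.map_id']

theorem mem_mixedClass_iff (hp : 1 < p) (hq : 1 < q) (hpq : p.Coprime q) {U c : ℕ}
    {l : List ℕ} :
    l ∈ mixedClass p q U c ↔ U / p ^ c % q = 1 ∧ ∃ m ∈ Omega p q (U / (p ^ c * q)), m ≠ [] ∧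
      ∃ t ∈ powPartitions p (U % p ^ c), l = m.map (· * (p ^ c * q)) ++ p ^ c :: t := by
  constructor
  · intro hl
    obtain ⟨m, t, hm, hne, ht, rfl, hU⟩ := exists_of_mem_mixedClass hp hq hpq hl
    obtain ⟨hdiv, hk, hmod⟩ := div_mod_eq_of_eq_mul_add hq (ht.sum_tail_lt hp) hU
    exact ⟨hdiv, m, hk ▸ hm, hne, t, ⟨ht.tail, hmod.symm⟩, rfl⟩
  · rintro ⟨h, m, hm, hne, t, ⟨ht, htsum⟩, rfl⟩
    obtain ⟨hm', ht'⟩ := takeWhile_dropWhile_map_mul_append hq hpq c m t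
    refine ⟨?_, by simpa [hm'] using hne, by simp [ht']⟩
    have := isSCPartition_map_mul_append hp hq hm
      (ht.pow_cons (htsum ▸ Nat.mod_lt _ (by positivity)))
    rwa [htsum, ← eq_mul_add_of_div_mod_eq_one h] at this

theorem pow_mul_succ_le_of_mem_mixedClass (hp : 1 < p) (hq : 1 < q) (hpq : p.Coprime q)
    {U c : ℕ} {l : List ℕ} (hl : l ∈ mixedClass p q U c) : p ^ c * (q + 1) ≤ U := by
  obtain ⟨m, t, hm, hne, -, -, hU⟩ := exists_of_mem_mixedClass hp hq hpq hl
  obtain ⟨x, hx⟩ := List.exists_mem_of_ne_nil m hne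
  have hm1 : 1 ≤ m.sum := (hm.pos_of_mem (by omega) (by omega) hx).trans_le (List.le_sum_of_mem hx)
  have := Nat.mul_le_mul_right (p ^ c * q) hm1
  rw [one_mul] at this
  rw [hU, mul_add, mul_one]
  omega

theorem ncard_mixedClass (hp : 1 < p) (hq : 1 < q) (hpq : p.Coprime q) {U c : ℕ}
    (hc : p ^ c * (q + 1) ≤ U) :
    (mixedClass p q U c).ncard = delta p q c U * W p q (U / (p ^ c * q)) := by
  by_cases h : U / p ^ c % q = 1
  · have hk : U / (p ^ c * q) ≠ 0 := by
      have hU := eq_mul_add_of_div_mod_eq_one h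
      have := Nat.mod_lt U (by positivity : 0 < p ^ c)
      intro hk
      rw [hk] at hU
      nlinarith
    have : mixedClass p q U c =
        (fun x : List ℕ × List ℕ => x.1.map (· * (p ^ c * q)) ++ p ^ c :: x.2) ''
          (Omega p q (U / (p ^ c * q)) ×ˢ powPartitions p (U % p ^ c)) := by
      ext l
      simp only [mem_mixedClass_iff hp hq hpq, h, true_and, Set.mem_image, Set.mem_prod,
        Prod.exists]
      constructor
      · rintro ⟨m, hm, -, t, ht, rfl⟩
        exact ⟨m, t, ⟨hm, ht⟩, rfl⟩
      · rintro ⟨m, t, ⟨hm, ht⟩, rfl⟩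
        exact ⟨m, hm, fun hnil => hk (hnil ▸ hm).2.2.symm, t, ht, rfl⟩
    rw [this, Set.ncard_image_of_injective _ (map_mul_append_pow_injective hq hpq c),
      Set.ncard_prod, ← W, ncard_powPartitions hp, delta]
    have := Wp_le_one p (U % p ^ c)
    interval_cases Wp p (U % p ^ c) <;> simp [h]
  · have : mixedClass p q U c = ∅ :=
      Set.eq_empty_of_forall_notMem fun l hl => h ((mem_mixedClass_iff hp hq hpq).1 hl).1
    rw [this, Set.ncard_empty, delta, if_neg fun h' => h h'.1, zero_mul]

theorem W_eq_sum_ncard_classes (hp : 1 < p) (hq : 1 < q) (hpq : p.Coprime q) {U N : ℕ}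
    (hU : U ≠ 0) (hN : ∀ c, p ^ c * (q + 1) ≤ U → c < N) :
    W p q U = (powPartitions p U).ncard + {l | l ∈ Omega p q U ∧ ∀ x ∈ l, q ∣ x}.ncard +
      ∑ c ∈ Finset.range N, (mixedClass p q U c).ncard := by
  classical
  have hfin := Omega_finite p q U
  have hcard (P : List ℕ → Prop) [DecidablePred P] :
      (hfin.toFinset.filter P).card = {l | l ∈ Omega p q U ∧ P l}.ncard := by
    rw [← Set.ncard_coe_finset, Finset.coe_filter]
    simp only [Set.Finite.mem_toFinset]
  have hmaps : Set.MapsTo (fun l : List ℕ => (l.dropWhile (q ∣ ·)).head?)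
      ↑(hfin.toFinset.filter fun l => ¬ l.takeWhile (q ∣ ·) = [])
      ↑(Finset.insertNone ((Finset.range N).image (p ^ ·))) := by
    intro l hl
    simp only [Finset.coe_filter, Set.Finite.mem_toFinset, Set.mem_ofPred_eq] at hl
    rw [Finset.mem_coe]
    dsimp only
    rcases h : (l.dropWhile (q ∣ ·)).head? with _ | y
    · exact Finset.none_mem_insertNone
    · obtain ⟨c, rfl⟩ := hl.1.isDescPowList_dropWhile.2 y (List.mem_of_mem_head? h)
      have := hN c (pow_mul_succ_le_of_mem_mixedClass hp hq hpq ⟨hl.1, hl.2, h⟩)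
      exact Finset.some_mem_insertNone.2 (Finset.mem_image_of_mem _ (Finset.mem_range.2 this))
  rw [W, Set.ncard_eq_toFinset_card _ hfin,
    ← Finset.card_filter_add_card_filter_not (fun l => l.takeWhile (q ∣ ·) = []),
    Finset.card_eq_sum_card_fiberwise hmaps, Finset.sum_insertNone,
    Finset.sum_image fun a _ b _ h => Nat.pow_right_injective hp h,
    add_assoc]
  simp only [Finset.filter_filter, hcard, setOf_takeWhile_eq_nil hp hq hpq,
    setOf_dropWhile_eq_nil hU, mixedClass, ne_eq]

theorem lt_ite_log_iff (hp : 1 < p) {c U : ℕ} :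
    c < (if U < q + 1 then 0 else Nat.log p (U / (q + 1)) + 1) ↔ p ^ c * (q + 1) ≤ U := by
  split_ifs with hU
  · simp only [Nat.not_lt_zero, false_iff, not_le]
    exact hU.trans_le (Nat.le_mul_of_pos_left _ (by positivity))
  · rw [Nat.lt_succ_iff, Nat.le_log_iff_pow_le hp (Nat.div_ne_zero_iff.2 ⟨by omega, by omega⟩),
      Nat.le_div_iff_mul_le (by omega)]

end

theorem W_general_relation (p q : ℕ) (hp : 1 < p) (hq : 1 < q) (hpq : Nat.Coprime p q)
    (U : ℕ) (hU : 1 ≤ U) :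
    W p q U = Wp p U + (if q ∣ U then W p q (U / q) else 0) +
      ∑ c ∈ Finset.range (if U < q + 1 then 0 else Nat.log p (U / (q + 1)) + 1),
        delta p q c U * W p q (U / (p ^ c * q)) := by
  have hN (c : ℕ) := lt_ite_log_iff hp (q := q) (c := c) (U := U)
  rw [W_eq_sum_ncard_classes hp hq hpq (by omega) fun c => (hN c).2, ncard_powPartitions hp,
    ncard_setOf_forall_dvd hp hq hpq ⟨0, 1, by simp⟩]
  congr 1
  exact Finset.sum_congr rfl fun c hc =>
    ncard_mixedClass hp hq hpq ((hN c).1 (Finset.mem_range.1 hc))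
end

section
/- Assume p = 2. Then for all nonnegative integers a and U, W(2^a·q·(2U+1) − 1) = W(qU + (q−1)/2). -/
/-!
Every partition in `Ω(V)` either avoids the part `1` or ends with it, and deleting that last
`1` identifies the second kind with `Ω*(V - 1)`. The smallest part of a partition divides every
part, hence `V`; in a partition from `Ω*` it is divisible by `p` or by `q`. So `Ω*(V) = ∅` when
`p ∤ V` and `q ∤ V`, while if `q ∤ p M` the smallest part of a partition in `Ω*(p M)` is a
power of `p` and dividing all parts by `p` is a bijection `Ω*(p M) ≃ Ω(M)`. Hence
`W(p V + 1) = W(V)` and `W(p M) = W(M)` whenever `q` divides none of the numbers involved.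
For `p = 2`, the number `2^a q (2U+1) - 1` lies just below a multiple of `q`, and so do all its
successive halvings: `a` odd steps lead to `q (2U+1) - 1 = 2 (qU + (q-1)/2)` and one even step
finishes.
-/

open List

section

variable {p q : ℕ}

lemma not_dvd_sub_of_dvd {n N k : ℕ} (hN : n ∣ N) (hk : 0 < k) (hkn : k < n) (hkN : k ≤ N) :
    ¬ n ∣ N - k :=
  (Nat.dvd_sub_iff_right hkN hN).not.mpr (Nat.not_dvd_of_pos_of_lt hk hkn)

lemma pos_of_coprime_of_one_lt (hp : 1 < p) (hpq : p.Coprime q) : 0 < q :=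
  Nat.pos_of_ne_zero fun hq => hp.ne' ((Nat.coprime_zero_right p).mp (hq ▸ hpq))

lemma dvd_or_dvd_of_eq_pow_mul_pow {x : ℕ} (hx : ∃ a b, x = p ^ a * q ^ b) (h1 : x ≠ 1) :
    p ∣ x ∨ q ∣ x := by
  obtain ⟨a, b, rfl⟩ := hx
  rcases a with _ | a
  · rcases b with _ | b
    · simp at h1
    · exact .inr (dvd_mul_of_dvd_right (dvd_pow_self q b.succ_ne_zero) _)
  · exact .inl (dvd_mul_of_dvd_left (dvd_pow_self p a.succ_ne_zero) _)

lemma exists_mul_eq_pow_mul_pow_iff (hp : 1 < p) (hpq : p.Coprime q) {x : ℕ} :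
    (∃ a b, p * x = p ^ a * q ^ b) ↔ ∃ a b, x = p ^ a * q ^ b := by
  constructor
  · rintro ⟨_ | a, b, hx⟩
    · have : p = 1 := (hpq.pow_right b).eq_one_of_dvd ⟨x, by simpa using hx.symm⟩
      omega
    · exact ⟨a, b, mul_left_cancel₀ (by omega : p ≠ 0) (by rw [hx]; ring)⟩
  · rintro ⟨a, b, rfl⟩
    exact ⟨a + 1, b, by ring⟩

lemma getLast_dvd_of_isChain {l : List ℕ} (h : l.IsChain (fun x y => y ∣ x ∧ y < x))
    (hne : l ≠ []) : ∀ x ∈ l, l.getLast hne ∣ x :=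
  h.backwards_induction _ _ (fun _ _ hxy hy => hy.trans hxy.1) (fun _ => dvd_rfl)

instance : IsTrans ℕ (fun x y => y ∣ x ∧ y < x) :=
  ⟨fun _ _ _ h₁ h₂ => ⟨h₂.1.trans h₁.1, h₂.2.trans h₁.2⟩⟩

lemma isChain_append_one_iff {l : List ℕ} :
    (l ++ [1]).IsChain (fun x y => y ∣ x ∧ y < x) ↔
      l.IsChain (fun x y => y ∣ x ∧ y < x) ∧ ∀ x ∈ l, 1 < x := by
  simp [isChain_iff_pairwise, pairwise_append]

lemma exists_eq_map_mul_of_forall_dvd {l : List ℕ} (h : ∀ x ∈ l, p ∣ x) :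
    ∃ l' : List ℕ, l = l'.map (p * ·) := by
  induction l with
  | nil => exact ⟨[], rfl⟩
  | cons x l ih =>
    obtain ⟨y, rfl⟩ := h x mem_cons_self
    obtain ⟨l', rfl⟩ := ih fun z hz => h z (mem_cons_of_mem _ hz)
    exact ⟨y :: l', rfl⟩

namespace IsSCPartition

variable {U : ℕ} {l : List ℕ}

lemma getLast_dvd (h : IsSCPartition p q U l) (hne : l ≠ []) : l.getLast hne ∣ U :=
  h.2.2 ▸ dvd_sum (getLast_dvd_of_isChain h.2.1 hne)

lemma append_one_iff (hp : 0 < p) (hq : 0 < q) :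
    IsSCPartition p q (U + 1) (l ++ [1]) ↔ IsSCPartition p q U l ∧ 1 ∉ l := by
  constructor
  · rintro ⟨hform, hchain, hsum⟩
    obtain ⟨hchain, hgt⟩ := isChain_append_one_iff.mp hchain
    exact ⟨⟨fun x hx => hform x (mem_append_left _ hx), hchain, by simpa using hsum⟩,
      fun h1 => (hgt 1 h1).false⟩
  · rintro ⟨⟨hform, hchain, hsum⟩, h1⟩
    refine ⟨?_, isChain_append_one_iff.mpr ⟨hchain, fun x hx => ?_⟩, by simp [hsum]⟩
    · simpa only [forall_mem_append, forall_mem_singleton] using ⟨hform, 0, 0, by simp⟩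
    · have hx1 : x ≠ 1 := ne_of_mem_of_not_mem hx h1
      obtain ⟨a, b, rfl⟩ := hform x hx
      have : 0 < p ^ a * q ^ b := by positivity
      omega

end IsSCPartition

lemma omega_add_one_eq_union (hp : 0 < p) (hq : 0 < q) (U : ℕ) :
    Omega p q (U + 1) = OmegaStar p q (U + 1) ∪ (· ++ [1]) '' OmegaStar p q U := by
  ext l
  simp only [Omega, OmegaStar, Set.mem_union, Set.mem_image, Set.mem_ofPred_eq]
  constructor
  · intro hl
    by_cases h1 : 1 ∈ l
    · right
      have hne : l ≠ [] := ne_nil_of_mem h1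
      have hlast : l.getLast hne = 1 := Nat.dvd_one.mp (getLast_dvd_of_isChain hl.2.1 hne 1 h1)
      have hsplit : l.dropLast ++ [1] = l := hlast ▸ dropLast_append_getLast hne
      rw [← hsplit] at hl
      exact ⟨l.dropLast, (IsSCPartition.append_one_iff hp hq).mp hl, hsplit⟩
    · exact .inl ⟨hl, h1⟩
  · rintro (⟨hl, -⟩ | ⟨l, hl, rfl⟩)
    · exact hl
    · exact (IsSCPartition.append_one_iff hp hq).mpr hl

lemma isSCPartition_map_mul_iff_s11 (hp : 1 < p) (hpq : p.Coprime q) {M : ℕ} {l : List ℕ} :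
    IsSCPartition p q (p * M) (l.map (p * ·)) ↔ IsSCPartition p q M l := by
  have hp0 : 0 < p := by omega
  refine and_congr (forall_mem_map.trans <| forall₂_congr fun x _ =>
    exists_mul_eq_pow_mul_pow_iff hp hpq) (and_congr ?_ ?_)
  · exact (isChain_map _).trans <| by
      simp only [Nat.mul_dvd_mul_iff_left hp0, Nat.mul_lt_mul_left hp0]; rfl
  · rw [sum_map_mul_left, map_id', mul_right_inj' hp0.ne']

lemma exists_dvd_of_mem_omegaStar {V : ℕ} {l : List ℕ} (hl : l ∈ OmegaStar p q V)
    (hne : l ≠ []) : ∃ d, (p ∣ d ∨ q ∣ d) ∧ d ∣ V ∧ ∀ x ∈ l, d ∣ x :=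
  ⟨l.getLast hne,
    dvd_or_dvd_of_eq_pow_mul_pow (hl.1.1 _ (getLast_mem hne))
      (ne_of_mem_of_not_mem (getLast_mem hne) hl.2),
    hl.1.getLast_dvd hne, getLast_dvd_of_isChain hl.1.2.1 hne⟩

lemma omegaStar_eq_empty {V : ℕ} (hV : V ≠ 0) (hpV : ¬ p ∣ V) (hqV : ¬ q ∣ V) :
    OmegaStar p q V = ∅ := by
  refine Set.eq_empty_of_forall_notMem fun l hl => ?_
  have hne : l ≠ [] := by
    rintro rfl
    exact hV hl.1.2.2.symm
  obtain ⟨d, hpd | hqd, hdV, -⟩ := exists_dvd_of_mem_omegaStar hl hne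
  exacts [hpV (hpd.trans hdV), hqV (hqd.trans hdV)]

lemma dvd_of_mem_omegaStar_mul {M : ℕ} (hqM : ¬ q ∣ p * M) {l : List ℕ}
    (hl : l ∈ OmegaStar p q (p * M)) : ∀ x ∈ l, p ∣ x := by
  intro x hx
  obtain ⟨d, hpd | hqd, hdM, hdl⟩ := exists_dvd_of_mem_omegaStar hl (ne_nil_of_mem hx)
  exacts [hpd.trans (hdl x hx), absurd (hqd.trans hdM) hqM]

lemma omegaStar_mul_eq_image (hp : 1 < p) (hpq : p.Coprime q) {M : ℕ} (hqM : ¬ q ∣ p * M) :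
    OmegaStar p q (p * M) = map (p * ·) '' Omega p q M := by
  ext l
  constructor
  · intro hl
    obtain ⟨l', rfl⟩ := exists_eq_map_mul_of_forall_dvd (dvd_of_mem_omegaStar_mul hqM hl)
    exact ⟨l', (isSCPartition_map_mul_iff_s11 hp hpq).mp hl.1, rfl⟩
  · rintro ⟨l', hl', rfl⟩
    refine ⟨(isSCPartition_map_mul_iff_s11 hp hpq).mpr hl', fun h1 => ?_⟩
    obtain ⟨x, -, hx⟩ := mem_map.mp h1
    exact hp.ne' (Nat.eq_one_of_mul_eq_one_right hx)

lemma W_mul_add_one (hp : 1 < p) (hpq : p.Coprime q) {V : ℕ} (h₁ : ¬ q ∣ p * V + 1)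
    (h₀ : ¬ q ∣ p * V) : W p q (p * V + 1) = W p q V := by
  have hpV : ¬ p ∣ p * V + 1 := by
    rw [Nat.dvd_add_right (dvd_mul_right p V), Nat.dvd_one]
    exact hp.ne'
  rw [W, omega_add_one_eq_union (by omega) (pos_of_coprime_of_one_lt hp hpq),
    omegaStar_eq_empty (by omega) hpV h₁, Set.empty_union, omegaStar_mul_eq_image hp hpq h₀,
    Set.ncard_image_of_injective _ (append_left_injective _),
    Set.ncard_image_of_injective _ (map_injective_iff.mpr (mul_right_injective₀ (by omega))), W]

lemma W_mul (hp : 1 < p) (hpq : p.Coprime q) {M : ℕ} (hM : M ≠ 0) (h₀ : ¬ q ∣ p * M)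
    (h₁ : ¬ q ∣ p * M - 1) : W p q (p * M) = W p q M := by
  have hpM : p ≤ p * M := Nat.le_mul_of_pos_right p (Nat.pos_of_ne_zero hM)
  have hsplit : p * M = p * M - 1 + 1 := by omega
  have hpM' : ¬ p ∣ p * M - 1 := not_dvd_sub_of_dvd (dvd_mul_right p M) one_pos hp (by omega)
  rw [W, hsplit, omega_add_one_eq_union (by omega) (pos_of_coprime_of_one_lt hp hpq),
    omegaStar_eq_empty (by omega) hpM' h₁, Set.image_empty, Set.union_empty, ← hsplit,
    omegaStar_mul_eq_image hp hpq h₀,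
    Set.ncard_image_of_injective _ (map_injective_iff.mpr (mul_right_injective₀ (by omega))), W]

end

theorem W_reduction_p_eq_two (q : ℕ) (hq : 1 < q) (hq2 : Nat.Coprime 2 q)
    (a U : ℕ) :
    W 2 q (2 ^ a * q * (2 * U + 1) - 1) = W 2 q (q * U + (q - 1) / 2) := by
  have hq_odd : q = 2 * ((q - 1) / 2) + 1 := by
    obtain ⟨k, rfl⟩ := Nat.coprime_two_left.mp hq2
    omega
  have hq3 : 2 < q := by omega
  induction a with
  | zero =>
    have hN : q * (2 * U + 1) = 2 * (q * U) + q := by ring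
    rw [pow_zero, one_mul, show q * (2 * U + 1) - 1 = 2 * (q * U + (q - 1) / 2) by omega]
    refine W_mul one_lt_two hq2 (by omega) ?_ ?_
    · rw [show 2 * (q * U + (q - 1) / 2) = q * (2 * U + 1) - 1 by omega]
      exact not_dvd_sub_of_dvd (dvd_mul_right q _) one_pos hq (by omega)
    · rw [show 2 * (q * U + (q - 1) / 2) - 1 = q * (2 * U + 1) - 2 by omega]
      exact not_dvd_sub_of_dvd (dvd_mul_right q _) two_pos hq3 (by omega)
  | succ a ih =>
    have hdouble : 2 ^ (a + 1) * q * (2 * U + 1) = 2 * (2 ^ a * q * (2 * U + 1)) := by ring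
    set X := 2 ^ a * q * (2 * U + 1)
    have hqX : q ∣ X := ⟨2 ^ a * (2 * U + 1), by ring⟩
    have hX : 0 < X := by positivity
    rw [hdouble, show 2 * X - 1 = 2 * (X - 1) + 1 by omega, W_mul_add_one one_lt_two hq2, ih]
    · rw [show 2 * (X - 1) + 1 = 2 * X - 1 by omega]
      exact not_dvd_sub_of_dvd (hqX.mul_left 2) one_pos hq (by omega)
    · rw [show 2 * (X - 1) = 2 * X - 2 by omega]
      exact not_dvd_sub_of_dvd (hqX.mul_left 2) two_pos hq3 (by omega)
end
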